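/- One has d_5(23) = 336/312455, d_5(29) = 35272/35547765, and d_5(31) = 103905392/100280245065; in particular d_5(29) < d_5(23) and d_5(29) < d_5(31), so the sequence (d_5(p_i))_{i ≥ 4} is not unimodal. -/
import Mathlib


/-- `pp i` is the `i`-th prime (`pp 0 = 2`, `pp 1 = 3`, `pp 2 = 5`, ...). -/
noncomputable def pp (i : ℕ) : ℕ := Nat.nth Nat.Prime i

/-- `PP i = p₀ · p₁ ⋯ p_i`, the product of the first `i+1` primes. -/
noncomputable def PP (i : ℕ) : ℕ := ∏ j ∈ Finset.range (i + 1), pp j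

/-- `del r i` is the density `δ_r(i)` of positive integers having exactly `r`
prime divisors among `p₀, ..., p_i`: the proportion of `x ∈ {1, ..., PP i}`
divisible by exactly `r` of the primes `p₀, ..., p_i`. -/
noncomputable def del (r i : ℕ) : ℚ :=
  (((Finset.Icc 1 (PP i)).filter
      (fun x => ((Finset.range (i + 1)).filter (fun j => pp j ∣ x)).card = r)).card : ℚ) /
    (PP i : ℚ)

/-- `dd k i` is the density `d_k(p_i)` of positive integers whose `k`-th smallest
prime factor is `p_i`: the proportion of `x ∈ {1, ..., PP i}` divisible by `p_i`
and by exactly `k-1` of the primes `p₀, ..., p_{i-1}`. -/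
noncomputable def dd (k i : ℕ) : ℚ :=
  (((Finset.Icc 1 (PP i)).filter
      (fun x => pp i ∣ x ∧
        ((Finset.range i).filter (fun j => pp j ∣ x)).card = k - 1)).card : ℚ) /
    (PP i : ℚ)

open Finset

lemma pp_prime (j : ℕ) : (pp j).Prime :=
  Nat.nth_mem_of_infinite Nat.infinite_setOf_prime j

lemma pp_pos (j : ℕ) : 0 < pp j := (pp_prime j).pos

lemma pp_ne (j i : ℕ) (h : j ≠ i) : pp j ≠ pp i := by
  intro he
  exact h (Nat.nth_injective Nat.infinite_setOf_prime he)

/-- product of the first `i` primes -/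
noncomputable def Q (i : ℕ) : ℕ := ∏ j ∈ Finset.range i, pp j

lemma Q_pos (i : ℕ) : 0 < Q i := Finset.prod_pos fun j _ => pp_pos j

lemma PP_eq (i : ℕ) : PP i = Q i * pp i := by
  rw [PP, Q, Finset.prod_range_succ]

lemma coprime_Q (i : ℕ) : Nat.Coprime (Q i) (pp i) := by
  apply Nat.Coprime.prod_left
  intro j hj
  exact (Nat.coprime_primes (pp_prime j) (pp_prime i)).mpr
    (pp_ne j i (Finset.mem_range.mp hj).ne)

/-- number of `x < Q i` divisible by exactly `r` of the first `i` primes -/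
noncomputable def cnt (i r : ℕ) : ℕ :=
  ((Finset.range (Q i)).filter
    (fun x => ((Finset.range i).filter (fun j => pp j ∣ x)).card = r)).card

/-- CRT counting lemma. -/
lemma card_filter_range_mul {a b : ℕ} (ha : 0 < a) (hb : 0 < b) (hab : Nat.Coprime a b)
    (Pa Pb : ℕ → Prop) [DecidablePred Pa] [DecidablePred Pb]
    (hPa : ∀ x, Pa (x % a) ↔ Pa x) (hPb : ∀ x, Pb (x % b) ↔ Pb x) :
    ((Finset.range (a * b)).filter (fun x => Pa x ∧ Pb x)).card
      = ((Finset.range a).filter Pa).card * ((Finset.range b).filter Pb).card := by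
  rw [← Finset.card_product, ← Finset.filter_product]
  apply Finset.card_bij (fun x _ => ((x % a : ℕ), (x % b : ℕ)))
  · intro x hx
    simp only [Finset.mem_filter, Finset.mem_range, Finset.mem_product] at hx ⊢
    exact ⟨⟨Nat.mod_lt _ ha, Nat.mod_lt _ hb⟩, (hPa x).mpr hx.2.1, (hPb x).mpr hx.2.2⟩
  · intro x hx y hy hxy
    simp only [Finset.mem_filter, Finset.mem_range] at hx hy
    simp only [Prod.mk.injEq] at hxy
    have h1 : x ≡ y [MOD a * b] :=
      (Nat.modEq_and_modEq_iff_modEq_mul hab).mp ⟨hxy.1, hxy.2⟩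
    have := h1
    unfold Nat.ModEq at this
    rwa [Nat.mod_eq_of_lt hx.1, Nat.mod_eq_of_lt hy.1] at this
  · rintro ⟨u, v⟩ huv
    simp only [Finset.mem_filter, Finset.mem_product, Finset.mem_range] at huv
    obtain ⟨⟨hua, hvb⟩, hPau, hPbv⟩ := huv
    obtain ⟨z, hz1, hz2⟩ := Nat.chineseRemainder hab u v
    refine ⟨z % (a * b), ?_, ?_⟩
    · simp only [Finset.mem_filter, Finset.mem_range]
      have hda : z % (a * b) % a = u := by
        rw [Nat.mod_mod_of_dvd _ ⟨b, rfl⟩, hz1, Nat.mod_eq_of_lt hua]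
      have hdb : z % (a * b) % b = v := by
        rw [Nat.mod_mod_of_dvd _ ⟨a, mul_comm a b⟩, hz2, Nat.mod_eq_of_lt hvb]
      refine ⟨Nat.mod_lt _ (Nat.mul_pos ha hb), ?_, ?_⟩
      · rw [← hPa]; rw [hda]; exact hPau
      · rw [← hPb]; rw [hdb]; exact hPbv
    · simp only [Prod.mk.injEq]
      constructor
      · rw [Nat.mod_mod_of_dvd _ ⟨b, rfl⟩, hz1, Nat.mod_eq_of_lt hua]
      · rw [Nat.mod_mod_of_dvd _ ⟨a, mul_comm a b⟩, hz2, Nat.mod_eq_of_lt hvb]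

lemma dvd_mod_Q_iff {j i x : ℕ} (hj : j < i) : pp j ∣ x % Q i ↔ pp j ∣ x :=
  Nat.dvd_mod_iff (Finset.dvd_prod_of_mem _ (Finset.mem_range.mpr hj))

lemma cardc_mod (i x : ℕ) :
    ((Finset.range i).filter (fun j => pp j ∣ x % Q i)).card
      = ((Finset.range i).filter (fun j => pp j ∣ x)).card := by
  congr 1
  apply Finset.filter_congr
  intro j hj
  simp only [dvd_mod_Q_iff (Finset.mem_range.mp hj)]

lemma card_dvd_self (p : ℕ) (hp : 0 < p) :
    ((Finset.range p).filter (fun y => p ∣ y)).card = 1 := by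
  have : (Finset.range p).filter (fun y => p ∣ y) = {0} := by
    ext y
    simp only [Finset.mem_filter, Finset.mem_range, Finset.mem_singleton]
    constructor
    · rintro ⟨hy, hd⟩; exact Nat.eq_zero_of_dvd_of_lt hd hy
    · rintro rfl; exact ⟨hp, dvd_zero _⟩
  rw [this]; rfl

lemma card_not_dvd_self (p : ℕ) (hp : 0 < p) :
    ((Finset.range p).filter (fun y => ¬ p ∣ y)).card = p - 1 := by
  have h := Finset.card_filter_add_card_filter_not
    (s := Finset.range p) (p := fun y => p ∣ y)
  rw [card_dvd_self p hp, Finset.card_range] at h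
  omega

lemma cnt_split (i r : ℕ) (P : ℕ → Prop) [DecidablePred P]
    (hP : ∀ x, P (x % pp i) ↔ P x) :
    ((Finset.range (Q (i + 1))).filter
      (fun x => ((Finset.range i).filter (fun j => pp j ∣ x)).card = r ∧ P x)).card
    = cnt i r * ((Finset.range (pp i)).filter P).card := by
  have hq : Q (i + 1) = Q i * pp i := Finset.prod_range_succ _ _
  rw [hq]
  rw [card_filter_range_mul (Q_pos i) (pp_pos i) (coprime_Q i)
    (fun x => ((Finset.range i).filter (fun j => pp j ∣ x)).card = r) P
    (fun x => by simp only [cardc_mod]) hP]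
  rfl

lemma filter_range_succ_card (i x : ℕ) :
    ((Finset.range (i + 1)).filter (fun j => pp j ∣ x)).card
    = ((Finset.range i).filter (fun j => pp j ∣ x)).card + (if pp i ∣ x then 1 else 0) := by
  rw [Finset.range_add_one, Finset.filter_insert]
  by_cases h : pp i ∣ x
  · rw [if_pos h, if_pos h, Finset.card_insert_of_notMem (by simp)]
  · rw [if_neg h, if_neg h, add_zero]

lemma cnt_succ_zero (i : ℕ) : cnt (i + 1) 0 = cnt i 0 * (pp i - 1) := by
  unfold cnt
  have : ∀ x : ℕ, (((Finset.range (i+1)).filter (fun j => pp j ∣ x)).card = 0)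
       ↔ (((Finset.range i).filter (fun j => pp j ∣ x)).card = 0 ∧ ¬ pp i ∣ x) := by
    intro x
    rw [filter_range_succ_card]
    by_cases h : pp i ∣ x <;> simp [h]
  calc ((Finset.range (Q (i+1))).filter
        (fun x => ((Finset.range (i+1)).filter (fun j => pp j ∣ x)).card = 0)).card
      = ((Finset.range (Q (i+1))).filter
        (fun x => ((Finset.range i).filter (fun j => pp j ∣ x)).card = 0 ∧ ¬ pp i ∣ x)).card := by
        apply Finset.card_nbij id (by intro x hx; simp_all [this x]) ?_ ?_
        · intro x hx y hy h; exact h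
        · intro y hy; refine ⟨y, ?_, rfl⟩; simp_all [this y]
    _ = cnt i 0 * ((Finset.range (pp i)).filter (fun y => ¬ pp i ∣ y)).card := by
        exact cnt_split i 0 (fun y => ¬ pp i ∣ y)
          (fun x => by simp only [Nat.dvd_mod_iff dvd_rfl])
    _ = cnt i 0 * (pp i - 1) := by rw [card_not_dvd_self _ (pp_pos i)]

lemma cnt_succ (i r : ℕ) :
    cnt (i + 1) (r + 1) = cnt i r + cnt i (r + 1) * (pp i - 1) := by
  have key : ∀ x : ℕ, (((Finset.range (i+1)).filter (fun j => pp j ∣ x)).card = r + 1)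
      ↔ (((((Finset.range i).filter (fun j => pp j ∣ x)).card = r ∧ pp i ∣ x))
        ∨ ((((Finset.range i).filter (fun j => pp j ∣ x)).card = r + 1 ∧ ¬ pp i ∣ x))) := by
    intro x
    rw [filter_range_succ_card]
    by_cases h : pp i ∣ x <;> simp [h]
  unfold cnt
  have heq : (Finset.range (Q (i+1))).filter
      (fun x => ((Finset.range (i+1)).filter (fun j => pp j ∣ x)).card = r + 1)
      = ((Finset.range (Q (i+1))).filter
          (fun x => ((Finset.range i).filter (fun j => pp j ∣ x)).card = r ∧ pp i ∣ x))
        ∪ ((Finset.range (Q (i+1))).filter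
          (fun x => ((Finset.range i).filter (fun j => pp j ∣ x)).card = r + 1 ∧ ¬ pp i ∣ x)) := by
    rw [← Finset.filter_or]
    apply Finset.filter_congr
    intro x _
    simpa using key x
  rw [heq, Finset.card_union_of_disjoint]
  · rw [cnt_split i r (fun y => pp i ∣ y) (fun x => by simp only [Nat.dvd_mod_iff dvd_rfl]),
      cnt_split i (r+1) (fun y => ¬ pp i ∣ y) (fun x => by simp only [Nat.dvd_mod_iff dvd_rfl]),
      card_dvd_self _ (pp_pos i), card_not_dvd_self _ (pp_pos i), mul_one]
    rfl
  · rw [Finset.disjoint_left]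
    intro x hx hy
    simp only [Finset.mem_filter] at hx hy
    exact hy.2.2 hx.2.2

lemma Icc_filter_card (N : ℕ) (hN : 0 < N) (P : ℕ → Prop) [DecidablePred P]
    (hP : ∀ x, P (x % N) ↔ P x) :
    ((Finset.Icc 1 N).filter P).card = ((Finset.range N).filter P).card := by
  apply Finset.card_bij (fun x _ => x % N)
  · intro x hx
    simp only [Finset.mem_filter, Finset.mem_Icc, Finset.mem_range] at hx ⊢
    exact ⟨Nat.mod_lt _ hN, (hP x).mpr hx.2⟩
  · intro x hx y hy h
    simp only [Finset.mem_filter, Finset.mem_Icc] at hx hy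
    obtain ⟨⟨hx1, hx2⟩, _⟩ := hx
    obtain ⟨⟨hy1, hy2⟩, _⟩ := hy
    rcases eq_or_lt_of_le hx2 with rfl | hx2'
    · rcases eq_or_lt_of_le hy2 with rfl | hy2'
      · rfl
      · rw [Nat.mod_self, Nat.mod_eq_of_lt hy2'] at h; omega
    · rcases eq_or_lt_of_le hy2 with rfl | hy2'
      · rw [Nat.mod_self, Nat.mod_eq_of_lt hx2'] at h; omega
      · rwa [Nat.mod_eq_of_lt hx2', Nat.mod_eq_of_lt hy2'] at h
  · intro u hu
    simp only [Finset.mem_filter, Finset.mem_range] at hu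
    rcases Nat.eq_zero_or_pos u with rfl | hu0
    · refine ⟨N, ?_, by rw [Nat.mod_self]⟩
      simp only [Finset.mem_filter, Finset.mem_Icc]
      refine ⟨⟨hN, le_refl N⟩, ?_⟩
      have := hP N
      rw [Nat.mod_self] at this
      exact this.mp hu.2
    · refine ⟨u, ?_, Nat.mod_eq_of_lt hu.1⟩
      simp only [Finset.mem_filter, Finset.mem_Icc]
      exact ⟨⟨hu0, le_of_lt hu.1⟩, hu.2⟩

lemma dvd_PP {j i : ℕ} (hj : j < i + 1) : pp j ∣ PP i :=
  Finset.dvd_prod_of_mem _ (Finset.mem_range.mpr hj)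

lemma PP_pos (i : ℕ) : 0 < PP i := Finset.prod_pos fun j _ => pp_pos j

lemma dd5_eq (i : ℕ) : dd 5 i = (cnt i 4 : ℚ) / (PP i : ℚ) := by
  unfold dd
  have hP : ∀ x : ℕ, ((pp i ∣ x % PP i ∧
      ((Finset.range i).filter (fun j => pp j ∣ x % PP i)).card = 5 - 1)
      ↔ (pp i ∣ x ∧ ((Finset.range i).filter (fun j => pp j ∣ x)).card = 5 - 1)) := by
    intro x
    apply and_congr
    · exact Nat.dvd_mod_iff (dvd_PP (Nat.lt_succ_self i))
    · constructor <;> intro h <;> rw [← h] <;> [skip; skip] <;> congr 1 <;>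
        apply Finset.filter_congr <;> intro j hj <;>
        simp only [Nat.dvd_mod_iff (dvd_PP (Nat.lt_succ_of_lt (Finset.mem_range.mp hj)))]
  rw [Icc_filter_card (PP i) (PP_pos i) _ hP]
  have h2 : ((Finset.range (PP i)).filter
      (fun x => pp i ∣ x ∧ ((Finset.range i).filter (fun j => pp j ∣ x)).card = 5 - 1)).card
      = ((Finset.range (Q (i+1))).filter
      (fun x => ((Finset.range i).filter (fun j => pp j ∣ x)).card = 4 ∧ pp i ∣ x)).card := by
    have : PP i = Q (i + 1) := by rw [PP_eq]; exact (Finset.prod_range_succ _ _).symm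
    rw [this]
    apply congrArg
    apply Finset.filter_congr
    intro x _
    constructor
    · rintro ⟨h1, h2⟩; exact ⟨h2, h1⟩
    · rintro ⟨h1, h2⟩; exact ⟨h2, h1⟩
  rw [h2, cnt_split i 4 (fun y => pp i ∣ y) (fun x => by simp only [Nat.dvd_mod_iff dvd_rfl]),
    card_dvd_self _ (pp_pos i), mul_one]


lemma pp_0 : pp 0 = 2 := by
  have h : Nat.count Nat.Prime 2 = 0 := by decide
  have h2 := Nat.nth_count (p := Nat.Prime) (n := 2) (by norm_num)
  rw [h] at h2; exact h2

lemma pp_1 : pp 1 = 3 := by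
  have h : Nat.count Nat.Prime 3 = 1 := by decide
  have h2 := Nat.nth_count (p := Nat.Prime) (n := 3) (by norm_num)
  rw [h] at h2; exact h2

lemma pp_2 : pp 2 = 5 := by
  have h : Nat.count Nat.Prime 5 = 2 := by decide
  have h2 := Nat.nth_count (p := Nat.Prime) (n := 5) (by norm_num)
  rw [h] at h2; exact h2

lemma pp_3 : pp 3 = 7 := by
  have h : Nat.count Nat.Prime 7 = 3 := by decide
  have h2 := Nat.nth_count (p := Nat.Prime) (n := 7) (by norm_num)
  rw [h] at h2; exact h2

lemma pp_4 : pp 4 = 11 := by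
  have h : Nat.count Nat.Prime 11 = 4 := by decide
  have h2 := Nat.nth_count (p := Nat.Prime) (n := 11) (by norm_num)
  rw [h] at h2; exact h2

lemma pp_5 : pp 5 = 13 := by
  have h : Nat.count Nat.Prime 13 = 5 := by decide
  have h2 := Nat.nth_count (p := Nat.Prime) (n := 13) (by norm_num)
  rw [h] at h2; exact h2

lemma pp_6 : pp 6 = 17 := by
  have h : Nat.count Nat.Prime 17 = 6 := by decide
  have h2 := Nat.nth_count (p := Nat.Prime) (n := 17) (by norm_num)
  rw [h] at h2; exact h2

lemma pp_7 : pp 7 = 19 := by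
  have h : Nat.count Nat.Prime 19 = 7 := by decide
  have h2 := Nat.nth_count (p := Nat.Prime) (n := 19) (by norm_num)
  rw [h] at h2; exact h2

lemma pp_8 : pp 8 = 23 := by
  have h : Nat.count Nat.Prime 23 = 8 := by decide
  have h2 := Nat.nth_count (p := Nat.Prime) (n := 23) (by norm_num)
  rw [h] at h2; exact h2

lemma pp_9 : pp 9 = 29 := by
  have h : Nat.count Nat.Prime 29 = 9 := by decide
  have h2 := Nat.nth_count (p := Nat.Prime) (n := 29) (by norm_num)
  rw [h] at h2; exact h2

lemma pp_10 : pp 10 = 31 := by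
  have h : Nat.count Nat.Prime 31 = 10 := by decide
  have h2 := Nat.nth_count (p := Nat.Prime) (n := 31) (by norm_num)
  rw [h] at h2; exact h2

lemma cnt_0_0 : cnt 0 0 = 1 := by simp [cnt, Q]

lemma cnt_0_1 : cnt 0 1 = 0 := by simp [cnt, Q]

lemma cnt_0_2 : cnt 0 2 = 0 := by simp [cnt, Q]

lemma cnt_0_3 : cnt 0 3 = 0 := by simp [cnt, Q]

lemma cnt_0_4 : cnt 0 4 = 0 := by simp [cnt, Q]

lemma cnt_1_0 : cnt 1 0 = 1 := by rw [cnt_succ_zero, cnt_0_0, pp_0]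

lemma cnt_1_1 : cnt 1 1 = 1 := by rw [cnt_succ, cnt_0_0, cnt_0_1, pp_0]

lemma cnt_1_2 : cnt 1 2 = 0 := by rw [cnt_succ, cnt_0_1, cnt_0_2, pp_0]

lemma cnt_1_3 : cnt 1 3 = 0 := by rw [cnt_succ, cnt_0_2, cnt_0_3, pp_0]

lemma cnt_1_4 : cnt 1 4 = 0 := by rw [cnt_succ, cnt_0_3, cnt_0_4, pp_0]

lemma cnt_2_0 : cnt 2 0 = 2 := by rw [cnt_succ_zero, cnt_1_0, pp_1]

lemma cnt_2_1 : cnt 2 1 = 3 := by rw [cnt_succ, cnt_1_0, cnt_1_1, pp_1]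

lemma cnt_2_2 : cnt 2 2 = 1 := by rw [cnt_succ, cnt_1_1, cnt_1_2, pp_1]

lemma cnt_2_3 : cnt 2 3 = 0 := by rw [cnt_succ, cnt_1_2, cnt_1_3, pp_1]

lemma cnt_2_4 : cnt 2 4 = 0 := by rw [cnt_succ, cnt_1_3, cnt_1_4, pp_1]

lemma cnt_3_0 : cnt 3 0 = 8 := by rw [cnt_succ_zero, cnt_2_0, pp_2]

lemma cnt_3_1 : cnt 3 1 = 14 := by rw [cnt_succ, cnt_2_0, cnt_2_1, pp_2]

lemma cnt_3_2 : cnt 3 2 = 7 := by rw [cnt_succ, cnt_2_1, cnt_2_2, pp_2]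

lemma cnt_3_3 : cnt 3 3 = 1 := by rw [cnt_succ, cnt_2_2, cnt_2_3, pp_2]

lemma cnt_3_4 : cnt 3 4 = 0 := by rw [cnt_succ, cnt_2_3, cnt_2_4, pp_2]

lemma cnt_4_0 : cnt 4 0 = 48 := by rw [cnt_succ_zero, cnt_3_0, pp_3]

lemma cnt_4_1 : cnt 4 1 = 92 := by rw [cnt_succ, cnt_3_0, cnt_3_1, pp_3]

lemma cnt_4_2 : cnt 4 2 = 56 := by rw [cnt_succ, cnt_3_1, cnt_3_2, pp_3]

lemma cnt_4_3 : cnt 4 3 = 13 := by rw [cnt_succ, cnt_3_2, cnt_3_3, pp_3]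

lemma cnt_4_4 : cnt 4 4 = 1 := by rw [cnt_succ, cnt_3_3, cnt_3_4, pp_3]

lemma cnt_5_0 : cnt 5 0 = 480 := by rw [cnt_succ_zero, cnt_4_0, pp_4]

lemma cnt_5_1 : cnt 5 1 = 968 := by rw [cnt_succ, cnt_4_0, cnt_4_1, pp_4]

lemma cnt_5_2 : cnt 5 2 = 652 := by rw [cnt_succ, cnt_4_1, cnt_4_2, pp_4]

lemma cnt_5_3 : cnt 5 3 = 186 := by rw [cnt_succ, cnt_4_2, cnt_4_3, pp_4]

lemma cnt_5_4 : cnt 5 4 = 23 := by rw [cnt_succ, cnt_4_3, cnt_4_4, pp_4]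

lemma cnt_6_0 : cnt 6 0 = 5760 := by rw [cnt_succ_zero, cnt_5_0, pp_5]

lemma cnt_6_1 : cnt 6 1 = 12096 := by rw [cnt_succ, cnt_5_0, cnt_5_1, pp_5]

lemma cnt_6_2 : cnt 6 2 = 8792 := by rw [cnt_succ, cnt_5_1, cnt_5_2, pp_5]

lemma cnt_6_3 : cnt 6 3 = 2884 := by rw [cnt_succ, cnt_5_2, cnt_5_3, pp_5]

lemma cnt_6_4 : cnt 6 4 = 462 := by rw [cnt_succ, cnt_5_3, cnt_5_4, pp_5]

lemma cnt_7_0 : cnt 7 0 = 92160 := by rw [cnt_succ_zero, cnt_6_0, pp_6]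

lemma cnt_7_1 : cnt 7 1 = 199296 := by rw [cnt_succ, cnt_6_0, cnt_6_1, pp_6]

lemma cnt_7_2 : cnt 7 2 = 152768 := by rw [cnt_succ, cnt_6_1, cnt_6_2, pp_6]

lemma cnt_7_3 : cnt 7 3 = 54936 := by rw [cnt_succ, cnt_6_2, cnt_6_3, pp_6]

lemma cnt_7_4 : cnt 7 4 = 10276 := by rw [cnt_succ, cnt_6_3, cnt_6_4, pp_6]

lemma cnt_8_0 : cnt 8 0 = 1658880 := by rw [cnt_succ_zero, cnt_7_0, pp_7]

lemma cnt_8_1 : cnt 8 1 = 3679488 := by rw [cnt_succ, cnt_7_0, cnt_7_1, pp_7]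

lemma cnt_8_2 : cnt 8 2 = 2949120 := by rw [cnt_succ, cnt_7_1, cnt_7_2, pp_7]

lemma cnt_8_3 : cnt 8 3 = 1141616 := by rw [cnt_succ, cnt_7_2, cnt_7_3, pp_7]

lemma cnt_8_4 : cnt 8 4 = 239904 := by rw [cnt_succ, cnt_7_3, cnt_7_4, pp_7]

lemma cnt_9_0 : cnt 9 0 = 36495360 := by rw [cnt_succ_zero, cnt_8_0, pp_8]

lemma cnt_9_1 : cnt 9 1 = 82607616 := by rw [cnt_succ, cnt_8_0, cnt_8_1, pp_8]

lemma cnt_9_2 : cnt 9 2 = 68560128 := by rw [cnt_succ, cnt_8_1, cnt_8_2, pp_8]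

lemma cnt_9_3 : cnt 9 3 = 28064672 := by rw [cnt_succ, cnt_8_2, cnt_8_3, pp_8]

lemma cnt_9_4 : cnt 9 4 = 6419504 := by rw [cnt_succ, cnt_8_3, cnt_8_4, pp_8]

lemma cnt_10_0 : cnt 10 0 = 1021870080 := by rw [cnt_succ_zero, cnt_9_0, pp_9]

lemma cnt_10_1 : cnt 10 1 = 2349508608 := by rw [cnt_succ, cnt_9_0, cnt_9_1, pp_9]

lemma cnt_10_2 : cnt 10 2 = 2002291200 := by rw [cnt_succ, cnt_9_1, cnt_9_2, pp_9]

lemma cnt_10_3 : cnt 10 3 = 854370944 := by rw [cnt_succ, cnt_9_2, cnt_9_3, pp_9]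

lemma cnt_10_4 : cnt 10 4 = 207810784 := by rw [cnt_succ, cnt_9_3, cnt_9_4, pp_9]


lemma PP_8 : PP 8 = 223092870 := by
  show (∏ j ∈ Finset.range 9, pp j) = 223092870
  rw [Finset.prod_range_succ, Finset.prod_range_succ, Finset.prod_range_succ,
    Finset.prod_range_succ, Finset.prod_range_succ, Finset.prod_range_succ,
    Finset.prod_range_succ, Finset.prod_range_succ, Finset.prod_range_succ,
    Finset.prod_range_zero, pp_0, pp_1, pp_2, pp_3, pp_4, pp_5, pp_6, pp_7, pp_8]
  norm_num

lemma PP_9 : PP 9 = 6469693230 := by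
  show (∏ j ∈ Finset.range 10, pp j) = 6469693230
  rw [Finset.prod_range_succ]
  have : (∏ j ∈ Finset.range 9, pp j) = 223092870 := PP_8
  rw [this, pp_9]
  norm_num

lemma PP_10 : PP 10 = 200560490130 := by
  show (∏ j ∈ Finset.range 11, pp j) = 200560490130
  rw [Finset.prod_range_succ]
  have : (∏ j ∈ Finset.range 10, pp j) = 6469693230 := PP_9
  rw [this, pp_10]
  norm_num

lemma dd58 : dd 5 8 = 336 / 312455 := by
  rw [dd5_eq, cnt_8_4, PP_8]; norm_num

lemma dd59 : dd 5 9 = 35272 / 35547765 := by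
  rw [dd5_eq, cnt_9_4, PP_9]; norm_num

lemma dd510 : dd 5 10 = 103905392 / 100280245065 := by
  rw [dd5_eq, cnt_10_4, PP_10]; norm_num

/-- `d_5(23) = 336/312455`, `d_5(29) = 35272/35547765`,
`d_5(31) = 103905392/100280245065` (here `23 = p_8`, `29 = p_9`, `31 = p_10`);
in particular `d_5(29) < d_5(23)` and `d_5(29) < d_5(31)`, so `(d_5(p_i))_{i ≥ 4}`
is not unimodal. -/
theorem dd_five_not_unimodal :
    dd 5 8 = 336 / 312455 ∧ dd 5 9 = 35272 / 35547765 ∧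
    dd 5 10 = 103905392 / 100280245065 ∧
    dd 5 9 < dd 5 8 ∧ dd 5 9 < dd 5 10 ∧
    ¬ ∃ istar : ℕ,
      (∀ i : ℕ, 4 ≤ i → i < istar → dd 5 i ≤ dd 5 (i + 1)) ∧
      (∀ i : ℕ, 4 ≤ i → istar ≤ i → dd 5 (i + 1) ≤ dd 5 i) := by
  have h1 : dd 5 9 < dd 5 8 := by rw [dd58, dd59]; norm_num
  have h2 : dd 5 9 < dd 5 10 := by rw [dd59, dd510]; norm_num
  refine ⟨dd58, dd59, dd510, h1, h2, ?_⟩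
  rintro ⟨istar, hup, hdown⟩
  rcases le_or_gt istar 9 with h | h
  · have := hdown 9 (by norm_num) h
    linarith
  · have := hup 8 (by norm_num) (by omega)
    linarith
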